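/- (Claim 1) Let A₁'={x^{−σ_p}, x^{−σ_q,1_{[q̄]}} : p∈I_{2,3}, q∈I₅} and A₁=A₁' if 𝒥₀={0}, A₁=A₁'∪{1} if 𝒥₀=ℕ. For every y∈A₁ and every u∈𝒦 there exists v∈𝒦 such that u=[y,v] and, for every z∈A₁∖{y} with [z,u]=0, also [z,v]=0. In particular, ad y:𝒦→𝒦 is surjective for every y∈A₁. -/

import Mathlib

noncomputable section

/-- `ι_i = ℓ₁ + ⋯ + ℓ_i`. -/
def iot (ℓ : ℕ → ℕ) (i : ℕ) : ℕ := ∑ k ∈ Finset.Icc 1 i, ℓ k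

/-- `I_{i,j} = {ι_{i-1}+1, …, ι_j}`. -/
def iSet (ℓ : ℕ → ℕ) (i j : ℕ) : Finset ℕ := Finset.Icc (iot ℓ (i - 1) + 1) (iot ℓ j)

/-- The index-shift map `p ↦ p̄` (shift by `ι₆`). -/
def bar (ℓ : ℕ → ℕ) (p : ℕ) : ℕ := if p ≤ iot ℓ 6 then p + iot ℓ 6 else p - iot ℓ 6

/-- `K̄ = {p̄ : p ∈ K}`. -/
def barSet (ℓ : ℕ → ℕ) (K : Finset ℕ) : Finset ℕ := K.image (bar ℓ)

/-- `J_{i,j} = I_{i,j} ∪ Ī_{i,j}`. -/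
def jSet (ℓ : ℕ → ℕ) (i j : ℕ) : Finset ℕ := iSet ℓ i j ∪ barSet ℓ (iSet ℓ i j)

/-- The semigroup `𝒥 = 𝒥₀ × 𝒥₁`, encoded as functions `ℕ → ℕ`; `j0 = true`
means `𝒥₀ = ℕ` and `j0 = false` means `𝒥₀ = {0}`. -/
def jIdx (ℓ : ℕ → ℕ) (j0 : Bool) : Set (ℕ → ℕ) :=
  {i | (j0 = false → i 0 = 0) ∧
    ∀ p, 1 ≤ p →
      (p ∈ iSet ℓ 1 2 ∪ iSet ℓ 4 4 ∪ barSet ℓ (iSet ℓ 1 1) ∨ 2 * iot ℓ 6 < p) → i p = 0}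

/-- `σ_p` (with `σ_p = σ_{p̄}`). -/
def sgm (F : Type*) [Field F] (ℓ : ℕ → ℕ) (p : ℕ) : ℕ → F :=
  let q := if p ≤ iot ℓ 6 then p else p - iot ℓ 6
  if q ∈ iSet ℓ 1 3 then -Pi.single q (1 : F) - Pi.single (q + iot ℓ 6) (1 : F)
  else if q ∈ iSet ℓ 4 5 then -Pi.single q (1 : F)
  else 0

/-- The underlying space `𝒜`: the free `F`-module with basis `Γ × 𝒥`. -/
abbrev CA (F : Type*) [Field F] (ℓ : ℕ → ℕ) (Γ : AddSubgroup (ℕ → F)) (j0 : Bool) : Type _ :=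
  (↥Γ × ↥(jIdx ℓ j0)) →₀ F

/-- The basis monomial `x^{α,i⃗}`, with the convention that it is `0` if `(α,i⃗) ∉ Γ × 𝒥`. -/
def X (F : Type*) [Field F] (ℓ : ℕ → ℕ) (Γ : AddSubgroup (ℕ → F)) (j0 : Bool)
    (α : ℕ → F) (i : ℕ → ℕ) : CA F ℓ Γ j0 :=
  @dite _ (α ∈ Γ ∧ i ∈ jIdx ℓ j0) (Classical.dec _)
    (fun h => Finsupp.single (⟨α, h.1⟩, ⟨i, h.2⟩) 1) (fun _ => 0)

variable (F : Type*) [Field F] (ℓ : ℕ → ℕ) (Γ : AddSubgroup (ℕ → F)) (j0 : Bool)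

/-- The commutative associative product on `𝒜`. -/
def mulA (u v : CA F ℓ Γ j0) : CA F ℓ Γ j0 :=
  u.sum fun a ca => v.sum fun b cb =>
    (ca * cb) • X F ℓ Γ j0 (a.1.1 + b.1.1) (a.2.1 + b.2.1)

/-- The grading operator `∂*_p`. -/
def pstar (p : ℕ) (u : CA F ℓ Γ j0) : CA F ℓ Γ j0 :=
  u.sum fun a ca => (ca * a.1.1 p) • Finsupp.single a 1

/-- The down-grading operator `∂_{t_p}`. -/
def pt (p : ℕ) (u : CA F ℓ Γ j0) : CA F ℓ Γ j0 :=
  u.sum fun a ca => (ca * (a.2.1 p : F)) • X F ℓ Γ j0 a.1.1 (a.2.1 - Pi.single p 1)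

/-- `∂_p = ∂*_p + ∂_{t_p}`. -/
def dd (p : ℕ) (u : CA F ℓ Γ j0) : CA F ℓ Γ j0 := pstar F ℓ Γ j0 p u + pt F ℓ Γ j0 p u

/-- `∂ = Σ_{p∈J_{1,3}∪I_{4,5}} ∂*_p + Σ_{p∈I₆∪Ī_{4,6}} t_p ∂_{t_p}`. -/
def Dop (u : CA F ℓ Γ j0) : CA F ℓ Γ j0 :=
  (∑ p ∈ jSet ℓ 1 3 ∪ iSet ℓ 4 5, pstar F ℓ Γ j0 p u) +
    ∑ p ∈ iSet ℓ 6 6 ∪ barSet ℓ (iSet ℓ 4 6),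
      mulA F ℓ Γ j0 (X F ℓ Γ j0 0 (Pi.single p 1)) (pt F ℓ Γ j0 p u)

/-- The contact bracket (2.18):
`[u,v] = Σ_{p∈I} x^{σ_p}(∂_p u·∂_{p̄} v − ∂_{p̄} u·∂_p v) + (2−∂)(u)·∂₀(v) − ∂₀(u)·(2−∂)(v)`. -/
def brk (u v : CA F ℓ Γ j0) : CA F ℓ Γ j0 :=
  (∑ p ∈ iSet ℓ 1 6,
      mulA F ℓ Γ j0 (X F ℓ Γ j0 (sgm F ℓ p) 0)
        (mulA F ℓ Γ j0 (dd F ℓ Γ j0 p u) (dd F ℓ Γ j0 (bar ℓ p) v) -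
          mulA F ℓ Γ j0 (dd F ℓ Γ j0 (bar ℓ p) u) (dd F ℓ Γ j0 p v))) +
    mulA F ℓ Γ j0 ((2 : F) • u - Dop F ℓ Γ j0 u) (dd F ℓ Γ j0 0 v) -
    mulA F ℓ Γ j0 (dd F ℓ Γ j0 0 u) ((2 : F) • v - Dop F ℓ Γ j0 v)


/-- The set `A₁`: the ad-locally-finite but not ad-semisimple basis elements
(`x^{−σ_p}` for `p ∈ I_{2,3}`, `x^{−σ_q,1_{[q̄]}}` for `q ∈ I₅`, plus `1` if `𝒥₀ = ℕ`). -/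
def A1 (F : Type*) [Field F] (ℓ : ℕ → ℕ) (Γ : AddSubgroup (ℕ → F)) (j0 : Bool) :
    Set (CA F ℓ Γ j0) :=
  ((fun p => X F ℓ Γ j0 (-sgm F ℓ p) 0) '' ↑(iSet ℓ 2 3)) ∪
    ((fun q => X F ℓ Γ j0 (-sgm F ℓ q) (Pi.single (bar ℓ q) 1)) '' ↑(iSet ℓ 5 5)) ∪
    {y | j0 = true ∧ y = X F ℓ Γ j0 0 0}

/-- The set `A₂`: the ad-semisimple elements
(`x^{−σ_p}` for `p ∈ I₁`, `x^{−σ_q,1_{[q̄]}}` for `q ∈ I₄`, `t^{1_{[r]}+1_{[r̄]}}` for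
`r ∈ I₆`, plus `1` if `𝒥₀ = {0}`). -/
def A2 (F : Type*) [Field F] (ℓ : ℕ → ℕ) (Γ : AddSubgroup (ℕ → F)) (j0 : Bool) :
    Set (CA F ℓ Γ j0) :=
  ((fun p => X F ℓ Γ j0 (-sgm F ℓ p) 0) '' ↑(iSet ℓ 1 1)) ∪
    ((fun q => X F ℓ Γ j0 (-sgm F ℓ q) (Pi.single (bar ℓ q) 1)) '' ↑(iSet ℓ 4 4)) ∪
    ((fun r => X F ℓ Γ j0 0 (Pi.single r 1 + Pi.single (bar ℓ r) 1)) '' ↑(iSet ℓ 6 6)) ∪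
    {y | j0 = false ∧ y = X F ℓ Γ j0 0 0}

/-- The set `A₃`: `x^{2_{[p]}}` for `p ∈ I_{1,5}`, `t^{2_{[q]}}` for `q ∈ I₆`, plus
`x^{2_{[0]}}` if `Γ₀ ≠ {0}` or `t₀` if `Γ₀ = {0}`. -/
def A3 (F : Type*) [Field F] (ℓ : ℕ → ℕ) (Γ : AddSubgroup (ℕ → F)) (j0 : Bool) :
    Set (CA F ℓ Γ j0) :=
  ((fun p => X F ℓ Γ j0 (Pi.single p (2 : F)) 0) '' ↑(iSet ℓ 1 5)) ∪
    ((fun q => X F ℓ Γ j0 0 (Pi.single q 2)) '' ↑(iSet ℓ 6 6)) ∪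
    {y | ((∃ α ∈ Γ, α 0 ≠ 0) ∧ y = X F ℓ Γ j0 (Pi.single 0 (2 : F)) 0) ∨
      ((∀ α ∈ Γ, α 0 = 0) ∧ y = X F ℓ Γ j0 0 (Pi.single 0 1))}

/-- The set `A₄`: `x^{2_{[p̄]}}` for `p ∈ I_{1,3}`, `t^{2_{[q̄]}}` for `q ∈ I_{4,6}`, plus
`x^{−2_{[0]}}` if `Γ₀ ≠ {0}`. -/
def A4 (F : Type*) [Field F] (ℓ : ℕ → ℕ) (Γ : AddSubgroup (ℕ → F)) (j0 : Bool) :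
    Set (CA F ℓ Γ j0) :=
  ((fun p => X F ℓ Γ j0 (Pi.single (bar ℓ p) (2 : F)) 0) '' ↑(iSet ℓ 1 3)) ∪
    ((fun q => X F ℓ Γ j0 0 (Pi.single (bar ℓ q) 2)) '' ↑(iSet ℓ 4 6)) ∪
    {y | (∃ α ∈ Γ, α 0 ≠ 0) ∧ y = X F ℓ Γ j0 (Pi.single 0 (-2 : F)) 0}

/-!
For `y ∈ A₁`, `ad y` is a diagonal operator plus commuting lowering operators:
`ad 1 = 2∂₀`, `ad x^{-σ_p} = ∂_{p̄} - ∂_p`, `ad x^{-σ_q,1_{[q̄]}} = t_{q̄}∂_{t_{q̄}} - ∂_q`, all of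
the form `D = diag f + s ∂_{t_r} + c ∂_{t_m}` with `s ≠ 0`. A right inverse of `D` is built one
basis vector `x^a` at a time. If `f(a) ≠ 0`, it is the Neumann series of
`f(a)⁻¹ (1 + f(a)⁻¹ (s ∂_{t_r} + c ∂_{t_m}))⁻¹`, which terminates on `x^a`. If `f(a) = 0`, it is
`s⁻¹ ∫_r` (the integral in `t_r` inverts `∂_{t_r}` on the right) followed by a geometric series
in `∂_{t_m} ∫_r` that also terminates.
On `x^a` this inverse is a polynomial in `∂_{t_r}`, `∂_{t_m}`, `∫_r`, and it depends on `a` only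
through `f(a)`, `a_r` and `a_m`. For distinct `y, z ∈ A₁` the lowering directions are disjoint,
and each diagonal part does not change along the other's directions. So the right inverse of
`ad y` commutes with `ad z`, and it maps `ker (ad z)` into itself.
-/

namespace ContactA1

open Finset

section Exponents

lemma sub_single_sub_single_comm (i : ℕ → ℕ) (r r' : ℕ) :
    i - Pi.single r 1 - Pi.single r' 1 = i - Pi.single r' 1 - Pi.single r 1 := by
  funext p; simp only [Pi.sub_apply]; omega

lemma sub_single_add_single {i : ℕ → ℕ} {r : ℕ} (h : i r ≠ 0) :
    i - Pi.single r 1 + Pi.single r 1 = i := by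
  funext p; by_cases hp : p = r
  · subst hp; simp only [Pi.add_apply, Pi.sub_apply, Pi.single_eq_same]; omega
  · simp [hp]

lemma add_single_sub_single (i : ℕ → ℕ) (r : ℕ) : i + Pi.single r 1 - Pi.single r 1 = i := by
  funext p; simp only [Pi.add_apply, Pi.sub_apply]; omega

lemma add_single_sub_single_comm {i : ℕ → ℕ} {r r' : ℕ} (h : r ≠ r') :
    i + Pi.single r' 1 - Pi.single r 1 = i - Pi.single r 1 + Pi.single r' 1 := by
  funext p; simp only [Pi.add_apply, Pi.sub_apply, Pi.single_apply]; split_ifs <;> omega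

variable {ℓ : ℕ → ℕ} {j0 : Bool} {i j : ℕ → ℕ}

lemma zero_mem_jIdx : (0 : ℕ → ℕ) ∈ jIdx ℓ j0 := ⟨fun _ => rfl, fun _ _ _ => rfl⟩

lemma add_mem_jIdx (hi : i ∈ jIdx ℓ j0) (hj : j ∈ jIdx ℓ j0) : i + j ∈ jIdx ℓ j0 :=
  ⟨fun h => by simp [hi.1 h, hj.1 h], fun p hp hbad => by simp [hi.2 p hp hbad, hj.2 p hp hbad]⟩

lemma sub_single_mem_jIdx (hi : i ∈ jIdx ℓ j0) (r : ℕ) : i - Pi.single r 1 ∈ jIdx ℓ j0 :=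
  ⟨fun h => by simp [hi.1 h], fun p hp hbad => by simp [hi.2 p hp hbad]⟩

lemma mem_jIdx_of_add_mem (h : i + j ∈ jIdx ℓ j0) : i ∈ jIdx ℓ j0 :=
  ⟨fun h0 => by have := h.1 h0; simp only [Pi.add_apply] at this; omega,
    fun p hp hbad => by have := h.2 p hp hbad; simp only [Pi.add_apply] at this; omega⟩

lemma single_zero_mem_jIdx (h : j0 = true) : (Pi.single 0 1 : ℕ → ℕ) ∈ jIdx ℓ j0 :=
  ⟨fun h' => by simp [h] at h', fun p hp _ => Pi.single_eq_of_ne (by omega) 1⟩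

end Exponents

section Indices

variable {ℓ : ℕ → ℕ}

lemma iot_mono (ℓ : ℕ → ℕ) : Monotone (iot ℓ) := fun _ _ hij =>
  sum_le_sum_of_subset (Icc_subset_Icc_right hij)

lemma iot_chain (ℓ : ℕ → ℕ) : iot ℓ 0 = 0 ∧ iot ℓ 0 ≤ iot ℓ 1 ∧ iot ℓ 1 ≤ iot ℓ 2 ∧
    iot ℓ 2 ≤ iot ℓ 3 ∧ iot ℓ 3 ≤ iot ℓ 4 ∧ iot ℓ 4 ≤ iot ℓ 5 ∧ iot ℓ 5 ≤ iot ℓ 6 :=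
  ⟨by simp [iot], iot_mono ℓ (by norm_num), iot_mono ℓ (by norm_num), iot_mono ℓ (by norm_num),
    iot_mono ℓ (by norm_num), iot_mono ℓ (by norm_num), iot_mono ℓ (by norm_num)⟩

lemma mem_iSet {p i j : ℕ} : p ∈ iSet ℓ i j ↔ iot ℓ (i - 1) < p ∧ p ≤ iot ℓ j := by
  rw [iSet, mem_Icc, Nat.succ_le_iff]

lemma mem_iSet_succ {p i j : ℕ} : p ∈ iSet ℓ (i + 1) j ↔ iot ℓ i < p ∧ p ≤ iot ℓ j :=
  mem_iSet

lemma iSet_subset_iSet {i i' j j' : ℕ} (hi : i' ≤ i) (hj : j ≤ j') :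
    iSet ℓ i j ⊆ iSet ℓ i' j' :=
  Icc_subset_Icc (by have := iot_mono ℓ (Nat.sub_le_sub_right hi 1); omega) (iot_mono ℓ hj)

lemma le_iot_six_of_mem_iSet {p i j : ℕ} (hj : j ≤ 6) (hp : p ∈ iSet ℓ i j) : p ≤ iot ℓ 6 :=
  (mem_iSet.1 hp).2.trans (iot_mono ℓ hj)

lemma bar_of_le {p : ℕ} (h : p ≤ iot ℓ 6) : bar ℓ p = p + iot ℓ 6 := if_pos h

lemma mem_barSet_iSet {p i j : ℕ} (hj : j ≤ 6) :
    p ∈ barSet ℓ (iSet ℓ i j) ↔ iot ℓ (i - 1) + iot ℓ 6 < p ∧ p ≤ iot ℓ j + iot ℓ 6 := by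
  have hj6 : iot ℓ j ≤ iot ℓ 6 := iot_mono ℓ hj
  constructor
  · rintro hp
    obtain ⟨q, hq, rfl⟩ := mem_image.mp hp
    rw [mem_iSet] at hq
    rw [bar_of_le (by omega)]
    omega
  · intro hp
    refine mem_image.mpr ⟨p - iot ℓ 6, mem_iSet.mpr (by omega), ?_⟩
    rw [bar_of_le (by omega)]
    omega

lemma bounds_of_mem_iSet_23 {p : ℕ} (hp : p ∈ iSet ℓ 2 3) :
    iot ℓ 1 < p ∧ p ≤ iot ℓ 3 ∧ bar ℓ p = p + iot ℓ 6 :=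
  ⟨(mem_iSet_succ.1 hp).1, (mem_iSet_succ.1 hp).2,
    bar_of_le (le_iot_six_of_mem_iSet (by norm_num) hp)⟩

lemma bounds_of_mem_iSet_55 {q : ℕ} (hq : q ∈ iSet ℓ 5 5) :
    iot ℓ 4 < q ∧ q ≤ iot ℓ 5 ∧ bar ℓ q = q + iot ℓ 6 :=
  ⟨(mem_iSet_succ.1 hq).1, (mem_iSet_succ.1 hq).2,
    bar_of_le (le_iot_six_of_mem_iSet (by norm_num) hq)⟩

lemma single_mem_jIdx {j0 : Bool} {r : ℕ}
    (h : iot ℓ 2 < r ∧ r ≤ iot ℓ 3 ∨ iot ℓ 4 < r ∧ r ≤ iot ℓ 6 ∨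
      iot ℓ 1 + iot ℓ 6 < r ∧ r ≤ 2 * iot ℓ 6) :
    (Pi.single r 1 : ℕ → ℕ) ∈ jIdx ℓ j0 := by
  obtain ⟨h0, h1, h2, h3, h4, h5, h6⟩ := iot_chain ℓ
  refine ⟨fun _ => Pi.single_eq_of_ne (by omega) 1, fun p _ hp => Pi.single_eq_of_ne ?_ 1⟩
  rintro rfl
  simp only [mem_union, mem_iSet, mem_barSet_iSet (show 1 ≤ 6 by norm_num), Nat.reduceSub] at hp
  omega

end Indices

section Nilpotent

lemma one_add_apply_sum_alternating {R V : Type*} [CommRing R] [AddCommGroup V] [Module R V]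
    {T : Module.End R V} {v : V} {n : ℕ} (h : (T ^ n) v = 0) :
    (1 + T) ((∑ k ∈ range n, (-1 : R) ^ k • T ^ k) v) = v := by
  suffices key : ∀ n, (1 + T) (∑ k ∈ range n, (-1 : R) ^ k • (T ^ k) v) +
      (-1 : R) ^ n • (T ^ n) v = v by
    simpa [LinearMap.sum_apply, h] using key n
  intro n
  induction n with
  | zero => simp
  | succ n ih =>
    have e : (1 + T) ((T ^ n) v) = (T ^ n) v + (T ^ (n + 1)) v := by
      rw [pow_succ', Module.End.mul_apply]; rfl
    rw [sum_range_succ, map_add, map_smul, e]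
    linear_combination (norm := module) ih

lemma Commute.add_pow_apply_eq_zero {R V : Type*} [CommRing R] [AddCommMonoid V] [Module R V]
    {A B : Module.End R V} (hAB : Commute A B) {v : V} {i j : ℕ} (hA : (A ^ i) v = 0)
    (hB : (B ^ j) v = 0) : ((A + B) ^ (i + j)) v = 0 := by
  rw [hAB.add_pow, LinearMap.sum_apply]
  refine sum_eq_zero fun k _ => ?_
  rw [Module.End.mul_apply, Module.End.natCast_apply, Module.End.mul_apply, map_nsmul,
    map_nsmul]
  by_cases hk : i ≤ k
  · rw [← Module.End.mul_apply, (hAB.pow_pow k _).eq, Module.End.mul_apply,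
      ← pow_sub_mul_pow A hk, Module.End.mul_apply, hA]
    simp
  · rw [← pow_sub_mul_pow B (show j ≤ i + j - k by omega), Module.End.mul_apply, hB]
    simp

end Nilpotent

section Operators

variable {F : Type*} [Field F] {ℓ : ℕ → ℕ} {Γ : AddSubgroup (ℕ → F)} {j0 : Bool}

variable (F ℓ Γ j0) in
abbrev Idx : Type _ := ↥Γ × ↥(jIdx ℓ j0)

def mono (a : Idx F ℓ Γ j0) : CA F ℓ Γ j0 := Finsupp.single a 1

lemma X_eq_mono {α : ℕ → F} {i : ℕ → ℕ} (hα : α ∈ Γ) (hi : i ∈ jIdx ℓ j0) :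
    X F ℓ Γ j0 α i = mono (⟨α, hα⟩, ⟨i, hi⟩) :=
  dif_pos ⟨hα, hi⟩

lemma ext_mono {T S : Module.End F (CA F ℓ Γ j0)} (h : ∀ a, T (mono a) = S (mono a)) : T = S :=
  Finsupp.basisSingleOne.ext fun a => by simpa [mono] using h a

lemma linearCombination_mono (Ψ : Idx F ℓ Γ j0 → CA F ℓ Γ j0) (a : Idx F ℓ Γ j0) :
    Finsupp.linearCombination F Ψ (mono a) = Ψ a := by
  simp [mono]

lemma idx_ext {a b : Idx F ℓ Γ j0} (h1 : a.1.1 = b.1.1) (h2 : a.2.1 = b.2.1) : a = b :=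
  Prod.ext (Subtype.ext h1) (Subtype.ext h2)

def lo (a : Idx F ℓ Γ j0) (r : ℕ) : Idx F ℓ Γ j0 :=
  (a.1, ⟨a.2.1 - Pi.single r 1, sub_single_mem_jIdx a.2.2 r⟩)

def up (a : Idx F ℓ Γ j0) {r : ℕ} (hr : Pi.single r 1 ∈ jIdx ℓ j0) : Idx F ℓ Γ j0 :=
  (a.1, ⟨a.2.1 + Pi.single r 1, add_mem_jIdx a.2.2 hr⟩)

variable (F Γ) in
/-- `∂_{t_r}`. Where `i_r = 0` the truncated exponent `lo a r` is junk, but its coefficient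
vanishes. -/
def lower (r : ℕ) : Module.End F (CA F ℓ Γ j0) :=
  Finsupp.linearCombination F fun a => (a.2.1 r : F) • mono (lo a r)

variable (F Γ) in
/-- Integration in `t_r`, a right inverse of `∂_{t_r}`. -/
def raise {r : ℕ} (hr : Pi.single r 1 ∈ jIdx ℓ j0) : Module.End F (CA F ℓ Γ j0) :=
  Finsupp.linearCombination F fun a => ((a.2.1 r : F) + 1)⁻¹ • mono (up a hr)

variable (ℓ Γ j0) in
def diag (f : (ℕ → F) → (ℕ → ℕ) → F) : Module.End F (CA F ℓ Γ j0) :=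
  Finsupp.linearCombination F fun a => f a.1.1 a.2.1 • mono a

variable (ℓ Γ j0) in
/-- Multiplication by `x^{α,i⃗}`. -/
def shift (α : ℕ → F) (i : ℕ → ℕ) : Module.End F (CA F ℓ Γ j0) :=
  Finsupp.linearCombination F fun b => X F ℓ Γ j0 (α + b.1.1) (i + b.2.1)

lemma lower_mono (r : ℕ) (a : Idx F ℓ Γ j0) :
    lower F Γ r (mono a) = (a.2.1 r : F) • mono (lo a r) :=
  linearCombination_mono _ a

lemma raise_mono {r : ℕ} (hr : Pi.single r 1 ∈ jIdx ℓ j0) (a : Idx F ℓ Γ j0) :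
    raise F Γ hr (mono a) = ((a.2.1 r : F) + 1)⁻¹ • mono (up a hr) :=
  linearCombination_mono _ a

lemma diag_mono (f : (ℕ → F) → (ℕ → ℕ) → F) (a : Idx F ℓ Γ j0) :
    diag ℓ Γ j0 f (mono a) = f a.1.1 a.2.1 • mono a :=
  linearCombination_mono _ a

lemma shift_mono (α : ℕ → F) (i : ℕ → ℕ) (b : Idx F ℓ Γ j0) :
    shift ℓ Γ j0 α i (mono b) = X F ℓ Γ j0 (α + b.1.1) (i + b.2.1) :=
  linearCombination_mono _ b

lemma diag_sub (f g : (ℕ → F) → (ℕ → ℕ) → F) :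
    diag ℓ Γ j0 (fun α i => f α i - g α i) = diag ℓ Γ j0 f - diag ℓ Γ j0 g :=
  ext_mono fun a => by simp only [diag_mono, LinearMap.sub_apply, sub_smul]

lemma diag_const_mul (c : F) (f : (ℕ → F) → (ℕ → ℕ) → F) :
    diag ℓ Γ j0 (fun α i => c * f α i) = c • diag ℓ Γ j0 f :=
  ext_mono fun a => by simp only [diag_mono, LinearMap.smul_apply, smul_smul]

lemma shift_mul_shift {α β : ℕ → F} {i j : ℕ → ℕ} (hβ : β ∈ Γ) (hj : j ∈ jIdx ℓ j0) :
    shift ℓ Γ j0 α i * shift ℓ Γ j0 β j = shift ℓ Γ j0 (α + β) (i + j) := by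
  refine ext_mono fun c => ?_
  rw [Module.End.mul_apply, shift_mono, shift_mono,
    X_eq_mono (add_mem hβ c.1.2) (add_mem_jIdx hj c.2.2), shift_mono, add_assoc, add_assoc]

lemma shift_zero : shift ℓ Γ j0 0 0 = (1 : Module.End F (CA F ℓ Γ j0)) := by
  refine ext_mono fun c => ?_
  rw [shift_mono, zero_add, zero_add, X_eq_mono c.1.2 c.2.2]
  rfl

lemma shift_single_mul_lower {r : ℕ} :
    shift ℓ Γ j0 0 (Pi.single r 1) * lower F Γ r = diag ℓ Γ j0 (fun _ i => (i r : F)) := by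
  refine ext_mono fun a => ?_
  rw [Module.End.mul_apply, lower_mono, map_smul, shift_mono, diag_mono]
  by_cases h : a.2.1 r = 0
  · simp [h]
  · rw [zero_add, add_comm]
    simp only [lo]
    rw [sub_single_add_single h, X_eq_mono a.1.2 a.2.2]

end Operators

section Commutation

def ShiftInvariant {F : Type*} (f : (ℕ → F) → (ℕ → ℕ) → F) (r : ℕ) : Prop :=
  ∀ α i, f α (i + Pi.single r 1) = f α i

lemma ShiftInvariant.apply_sub_single {F : Type*} {f : (ℕ → F) → (ℕ → ℕ) → F} {r : ℕ}
    (hf : ShiftInvariant f r) (α : ℕ → F) {i : ℕ → ℕ} (hi : i r ≠ 0) :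
    f α (i - Pi.single r 1) = f α i := by
  rw [← hf, sub_single_add_single hi]

variable {F : Type*} [Field F] {ℓ : ℕ → ℕ} {Γ : AddSubgroup (ℕ → F)} {j0 : Bool}

lemma lower_commute_lower (r r' : ℕ) :
    Commute (lower F Γ r : Module.End F (CA F ℓ Γ j0)) (lower F Γ r') := by
  refine ext_mono fun a => ?_
  simp only [Module.End.mul_apply, lower_mono, map_smul, smul_smul]
  by_cases h : r = r'
  · subst h; rfl
  · have e : lo (lo a r') r = lo (lo a r) r' :=
      idx_ext rfl (sub_single_sub_single_comm _ _ _)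
    simp only [lo, Pi.sub_apply, Pi.single_apply, if_neg h, if_neg (Ne.symm h),
      Nat.sub_zero] at e ⊢
    rw [e, mul_comm]

lemma diag_commute_lower {f : (ℕ → F) → (ℕ → ℕ) → F} {r : ℕ} (hf : ShiftInvariant f r) :
    Commute (diag ℓ Γ j0 f) (lower F Γ r) := by
  refine ext_mono fun a => ?_
  simp only [Module.End.mul_apply, lower_mono, diag_mono, map_smul]
  by_cases h : a.2.1 r = 0
  · simp [h]
  · rw [show f (lo a r).1.1 (lo a r).2.1 = f a.1.1 a.2.1 from hf.apply_sub_single _ h,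
      smul_comm]

lemma diag_commute_raise {f : (ℕ → F) → (ℕ → ℕ) → F} {r : ℕ} (hf : ShiftInvariant f r)
    (hr : Pi.single r 1 ∈ jIdx ℓ j0) :
    Commute (diag ℓ Γ j0 f) (raise F Γ hr) := by
  refine ext_mono fun a => ?_
  simp only [Module.End.mul_apply, raise_mono, diag_mono, map_smul]
  rw [show f (up a hr).1.1 (up a hr).2.1 = f a.1.1 a.2.1 from hf _ _, smul_comm]

lemma lower_commute_raise {r r' : ℕ} (h : r ≠ r') (hr' : Pi.single r' 1 ∈ jIdx ℓ j0) :
    Commute (lower F Γ r : Module.End F (CA F ℓ Γ j0)) (raise F Γ hr') := by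
  refine ext_mono fun a => ?_
  simp only [Module.End.mul_apply, raise_mono, lower_mono, map_smul]
  have e : lo (up a hr') r = up (lo a r) hr' := idx_ext rfl (add_single_sub_single_comm h)
  simp only [lo, up, Pi.add_apply, Pi.sub_apply, Pi.single_apply, if_neg h,
    if_neg (Ne.symm h), add_zero, Nat.sub_zero] at e ⊢
  rw [e, smul_comm]

lemma lower_mul_raise [CharZero F] {r : ℕ} (hr : Pi.single r 1 ∈ jIdx ℓ j0) :
    (lower F Γ r : Module.End F (CA F ℓ Γ j0)) * raise F Γ hr = 1 := by
  refine ext_mono fun a => ?_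
  have e : lo (up a hr) r = a := idx_ext rfl (add_single_sub_single _ _)
  have hr1 : (up a hr).2.1 r = a.2.1 r + 1 := by simp [up]
  rw [Module.End.mul_apply, raise_mono, map_smul, lower_mono, e, hr1, smul_smul, Nat.cast_add_one,
    inv_mul_cancel₀ (Nat.cast_add_one_ne_zero _), one_smul, Module.End.one_apply]

lemma lower_pow_mono_eq_zero {r k : ℕ} {a : Idx F ℓ Γ j0} (h : a.2.1 r < k) :
    (lower F Γ r ^ k : Module.End F (CA F ℓ Γ j0)) (mono a) = 0 := by
  induction k generalizing a with
  | zero => omega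
  | succ k ih =>
    rw [pow_succ, Module.End.mul_apply, lower_mono, map_smul]
    by_cases h0 : a.2.1 r = 0
    · simp [h0]
    · rw [ih (by simp only [lo, Pi.sub_apply, Pi.single_eq_same]; omega), smul_zero]

end Commutation

/-- The shape `diag f + s ∂_{t_r} + c ∂_{t_m}` of `ad y` for the elements `y ∈ A₁`. -/
structure AdData (F : Type*) [Field F] (ℓ : ℕ → ℕ) (Γ : AddSubgroup (ℕ → F)) (j0 : Bool) where
  f : (ℕ → F) → (ℕ → ℕ) → F
  s : F
  c : F
  r : ℕ
  m : ℕ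
  s_ne_zero : s ≠ 0
  c_eq_zero_or_m_ne_r : c = 0 ∨ m ≠ r
  single_r_mem : Pi.single r 1 ∈ jIdx ℓ j0
  shiftInvariant_r : ShiftInvariant f r
  shiftInvariant_m : ShiftInvariant f m

namespace AdData

variable {F : Type*} [Field F] {ℓ : ℕ → ℕ} {Γ : AddSubgroup (ℕ → F)} {j0 : Bool}
  (P : AdData F ℓ Γ j0)

def nil : Module.End F (CA F ℓ Γ j0) := P.s • lower F Γ P.r + P.c • lower F Γ P.m

def toEnd : Module.End F (CA F ℓ Γ j0) := diag ℓ Γ j0 P.f + P.nil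

lemma diag_commute_nil : Commute (diag ℓ Γ j0 P.f) P.nil :=
  ((diag_commute_lower P.shiftInvariant_r).smul_right _).add_right
    ((diag_commute_lower P.shiftInvariant_m).smul_right _)

lemma nil_pow_mono_eq_zero (a : Idx F ℓ Γ j0) :
    (P.nil ^ ((a.2.1 P.r + 1) + (a.2.1 P.m + 1))) (mono a) = 0 := by
  refine Commute.add_pow_apply_eq_zero
    (((lower_commute_lower P.r P.m).smul_left P.s).smul_right P.c) ?_ ?_ <;>
    rw [smul_pow, LinearMap.smul_apply, lower_pow_mono_eq_zero (Nat.lt_succ_self _), smul_zero]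

def zeroStep : Module.End F (CA F ℓ Γ j0) :=
  (P.c * P.s⁻¹) • (lower F Γ P.m * raise F Γ P.single_r_mem)

/-- Right inverse of `toEnd` on the kernel of `diag f`, where `nil * (s⁻¹ ∫_r) = 1 + zeroStep`. -/
def invZero (n : ℕ) : Module.End F (CA F ℓ Γ j0) :=
  (P.s⁻¹ • raise F Γ P.single_r_mem) * ∑ k ∈ range n, (-1 : F) ^ k • P.zeroStep ^ k

/-- Neumann series inverting `toEnd = t (1 + t⁻¹ nil)` on an eigenvector of `diag f` with
eigenvalue `t ≠ 0`. -/
def invNe (t : F) (n : ℕ) : Module.End F (CA F ℓ Γ j0) :=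
  t⁻¹ • ∑ k ∈ range n, (-1 : F) ^ k • (t⁻¹ • P.nil) ^ k

lemma zeroStep_pow_mono_eq_zero {a : Idx F ℓ Γ j0} {n : ℕ} (hn : a.2.1 P.m < n) :
    (P.zeroStep ^ n) (mono a) = 0 := by
  rw [zeroStep, smul_pow, LinearMap.smul_apply]
  rcases P.c_eq_zero_or_m_ne_r with hc | hmr
  · rw [hc, zero_mul, zero_pow (by omega), zero_smul]
  · rw [(lower_commute_raise hmr P.single_r_mem).mul_pow,
      ((lower_commute_raise hmr P.single_r_mem).pow_pow n n).eq, Module.End.mul_apply,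
      lower_pow_mono_eq_zero hn, map_zero, smul_zero]

lemma nil_mul_raise [CharZero F] :
    P.nil * (P.s⁻¹ • raise F Γ P.single_r_mem) = 1 + P.zeroStep := by
  rw [nil, zeroStep, add_mul, smul_mul_smul_comm, smul_mul_smul_comm, lower_mul_raise,
    mul_inv_cancel₀ P.s_ne_zero, one_smul]

lemma toEnd_invZero_apply [CharZero F] {v : CA F ℓ Γ j0} (hv : diag ℓ Γ j0 P.f v = 0) {n : ℕ}
    (hn : (P.zeroStep ^ n) v = 0) : P.toEnd (P.invZero n v) = v := by
  have hstep : Commute (diag ℓ Γ j0 P.f) P.zeroStep :=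
    ((diag_commute_lower P.shiftInvariant_m).mul_right
      (diag_commute_raise P.shiftInvariant_r _)).smul_right _
  have hcomm : Commute (diag ℓ Γ j0 P.f) (P.invZero n) :=
    ((diag_commute_raise P.shiftInvariant_r _).smul_right _).mul_right <|
      Commute.sum_right _ _ _ fun k _ => (hstep.pow_right k).smul_right _
  rw [toEnd, LinearMap.add_apply, ← Module.End.mul_apply, hcomm.eq, Module.End.mul_apply, hv,
    map_zero, zero_add, invZero, ← Module.End.mul_apply, ← mul_assoc, nil_mul_raise,
    Module.End.mul_apply]
  exact one_add_apply_sum_alternating hn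

lemma toEnd_invNe_apply {t : F} (ht : t ≠ 0) {v : CA F ℓ Γ j0} (hv : diag ℓ Γ j0 P.f v = t • v)
    {n : ℕ} (hn : (P.nil ^ n) v = 0) : P.toEnd (P.invNe t n v) = v := by
  set S := ∑ k ∈ range n, (-1 : F) ^ k • (t⁻¹ • P.nil) ^ k
  have hS : Commute (diag ℓ Γ j0 P.f) S := Commute.sum_right _ _ _ fun k _ =>
    ((P.diag_commute_nil.smul_right _).pow_right k).smul_right _
  have hdiag : diag ℓ Γ j0 P.f (S v) = t • S v := by
    rw [← Module.End.mul_apply, hS.eq, Module.End.mul_apply, hv, map_smul]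
  have hnil : ((t⁻¹ • P.nil) ^ n) v = 0 := by rw [smul_pow, LinearMap.smul_apply, hn, smul_zero]
  calc P.toEnd (P.invNe t n v) = t⁻¹ • (diag ℓ Γ j0 P.f (S v) + P.nil (S v)) := by
        rw [invNe, LinearMap.smul_apply, map_smul, toEnd, LinearMap.add_apply]
    _ = (1 + t⁻¹ • P.nil) (S v) := by
        rw [hdiag, smul_add, smul_smul, inv_mul_cancel₀ ht, one_smul]; rfl
    _ = v := one_add_apply_sum_alternating hnil

/-- Both series terminate on `x^a` from this order on. -/
def order (a : Idx F ℓ Γ j0) : ℕ := (a.2.1 P.r + 1) + (a.2.1 P.m + 1)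

open Classical in
def invAt (a : Idx F ℓ Γ j0) : Module.End F (CA F ℓ Γ j0) :=
  if P.f a.1.1 a.2.1 = 0 then P.invZero (P.order a) else P.invNe (P.f a.1.1 a.2.1) (P.order a)

def inv : Module.End F (CA F ℓ Γ j0) := Finsupp.linearCombination F fun a => P.invAt a (mono a)

lemma toEnd_invAt_mono [CharZero F] (a : Idx F ℓ Γ j0) :
    P.toEnd (P.invAt a (mono a)) = mono a := by
  unfold invAt
  split_ifs with h
  · exact P.toEnd_invZero_apply (by rw [diag_mono, h, zero_smul])
      (P.zeroStep_pow_mono_eq_zero (by unfold order; omega))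
  · exact P.toEnd_invNe_apply h (diag_mono _ _) (P.nil_pow_mono_eq_zero a)

theorem toEnd_inv [CharZero F] (u : CA F ℓ Γ j0) : P.toEnd (P.inv u) = u := by
  have h : P.toEnd * P.inv = 1 := ext_mono fun a => by
    rw [Module.End.mul_apply, inv, linearCombination_mono, toEnd_invAt_mono]; rfl
  exact LinearMap.congr_fun h u

lemma commute_invAt {T : Module.End F (CA F ℓ Γ j0)} (hr : Commute T (lower F Γ P.r))
    (hm : Commute T (lower F Γ P.m)) (hu : Commute T (raise F Γ P.single_r_mem))
    (a : Idx F ℓ Γ j0) : Commute T (P.invAt a) := by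
  have hnil : Commute T P.nil := (hr.smul_right _).add_right (hm.smul_right _)
  unfold invAt invZero invNe zeroStep
  split_ifs
  · exact (hu.smul_right _).mul_right <| Commute.sum_right _ _ _ fun k _ =>
      (((hm.mul_right hu).smul_right _).pow_right k).smul_right _
  · exact (Commute.sum_right _ _ _ fun k _ =>
      ((hnil.smul_right _).pow_right k).smul_right _).smul_right _

lemma invAt_congr {a b : Idx F ℓ Γ j0} (hf : P.f b.1.1 b.2.1 = P.f a.1.1 a.2.1)
    (hr : b.2.1 P.r = a.2.1 P.r) (hm : b.2.1 P.m = a.2.1 P.m) : P.invAt b = P.invAt a := by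
  unfold invAt order
  rw [hf, hr, hm]

lemma inv_lower_mono {x : ℕ} (hr : x ≠ P.r) (hm : x ≠ P.m) (hx : ShiftInvariant P.f x)
    (a : Idx F ℓ Γ j0) : P.inv (lower F Γ x (mono a)) = P.invAt a (lower F Γ x (mono a)) := by
  rw [lower_mono, map_smul, map_smul, inv, linearCombination_mono]
  by_cases h : a.2.1 x = 0
  · simp [h]
  · rw [P.invAt_congr (a := a) (b := lo a x) (hx.apply_sub_single _ h)
      (by simp [lo, Pi.single_eq_of_ne hr.symm])
      (by simp [lo, Pi.single_eq_of_ne hm.symm])]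

lemma inv_diag_mono (g : (ℕ → F) → (ℕ → ℕ) → F) (a : Idx F ℓ Γ j0) :
    P.inv (diag ℓ Γ j0 g (mono a)) = P.invAt a (diag ℓ Γ j0 g (mono a)) := by
  rw [diag_mono, map_smul, map_smul, inv, linearCombination_mono]

lemma toEnd_commute_lower {x : ℕ} (hx : ShiftInvariant P.f x) :
    Commute P.toEnd (lower F Γ x) :=
  (diag_commute_lower hx).add_left <| ((lower_commute_lower _ _).smul_left _).add_left
    ((lower_commute_lower _ _).smul_left _)

lemma toEnd_commute_raise {x : ℕ} (hx : ShiftInvariant P.f x) (hr : P.r ≠ x) (hm : P.m ≠ x)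
    (hxmem : Pi.single x 1 ∈ jIdx ℓ j0) : Commute P.toEnd (raise F Γ hxmem) :=
  (diag_commute_raise hx hxmem).add_left <| ((lower_commute_raise hr hxmem).smul_left _).add_left
    ((lower_commute_raise hm hxmem).smul_left _)

/-- The conditions under which `P.inv` commutes with `Q.toEnd`. -/
structure Compatible (P Q : AdData F ℓ Γ j0) : Prop where
  r_ne_r : P.r ≠ Q.r
  r_ne_m : P.r ≠ Q.m
  m_ne_r : P.m ≠ Q.r
  m_ne_m : P.m ≠ Q.m
  left_r : ShiftInvariant P.f Q.r
  left_m : ShiftInvariant P.f Q.m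
  right_r : ShiftInvariant Q.f P.r
  right_m : ShiftInvariant Q.f P.m

variable {P} {Q : AdData F ℓ Γ j0}

theorem Compatible.inv_toEnd (h : P.Compatible Q) (u : CA F ℓ Γ j0) :
    P.inv (Q.toEnd u) = Q.toEnd (P.inv u) := by
  have key : P.inv * Q.toEnd = Q.toEnd * P.inv := ext_mono fun a => by
    have hc : Commute Q.toEnd (P.invAt a) :=
      P.commute_invAt (Q.toEnd_commute_lower h.right_r) (Q.toEnd_commute_lower h.right_m)
        (Q.toEnd_commute_raise h.right_r h.r_ne_r.symm h.r_ne_m.symm _) a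
    calc (P.inv * Q.toEnd) (mono a) = P.invAt a (Q.toEnd (mono a)) := by
          simp only [toEnd, nil, Module.End.mul_apply, LinearMap.add_apply, LinearMap.smul_apply,
            map_add, map_smul, P.inv_diag_mono,
            P.inv_lower_mono h.r_ne_r.symm h.m_ne_r.symm h.left_r,
            P.inv_lower_mono h.r_ne_m.symm h.m_ne_m.symm h.left_m]
      _ = Q.toEnd (P.invAt a (mono a)) := by rw [← Module.End.mul_apply, ← hc.eq]; rfl
      _ = (Q.toEnd * P.inv) (mono a) := by rw [Module.End.mul_apply, inv, linearCombination_mono]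
  exact LinearMap.congr_fun key u

lemma Compatible.toEnd_inv_eq_zero (h : P.Compatible Q) {u : CA F ℓ Γ j0}
    (hu : Q.toEnd u = 0) : Q.toEnd (P.inv u) = 0 := by
  rw [← h.inv_toEnd, hu, map_zero]

end AdData

section Bracket

variable {F : Type*} [Field F] {ℓ : ℕ → ℕ} {Γ : AddSubgroup (ℕ → F)} {j0 : Bool}

lemma pstar_eq_diag (p : ℕ) (u : CA F ℓ Γ j0) :
    pstar F ℓ Γ j0 p u = diag ℓ Γ j0 (fun α _ => α p) u := by
  rw [pstar, diag, Finsupp.linearCombination_apply]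
  refine Finsupp.sum_congr fun a _ => ?_
  rw [← smul_smul]
  rfl

lemma pt_eq_lower (p : ℕ) (u : CA F ℓ Γ j0) : pt F ℓ Γ j0 p u = lower F Γ p u := by
  rw [pt, lower, Finsupp.linearCombination_apply]
  refine Finsupp.sum_congr fun a _ => ?_
  rw [X_eq_mono a.1.2 (sub_single_mem_jIdx a.2.2 p), ← smul_smul]
  rfl

lemma dd_eq (p : ℕ) (u : CA F ℓ Γ j0) :
    dd F ℓ Γ j0 p u = diag ℓ Γ j0 (fun α _ => α p) u + lower F Γ p u := by
  rw [dd, pstar_eq_diag, pt_eq_lower]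

lemma dd_mono (p : ℕ) (a : Idx F ℓ Γ j0) :
    dd F ℓ Γ j0 p (mono a) = a.1.1 p • mono a + (a.2.1 p : F) • mono (lo a p) := by
  rw [dd_eq, diag_mono, lower_mono]

lemma mulA_zero_left (v : CA F ℓ Γ j0) : mulA F ℓ Γ j0 0 v = 0 :=
  Finsupp.sum_zero_index

lemma mulA_zero_right (u : CA F ℓ Γ j0) : mulA F ℓ Γ j0 u 0 = 0 := by
  simp [mulA]

lemma mulA_single (a : Idx F ℓ Γ j0) (c : F) (v : CA F ℓ Γ j0) :
    mulA F ℓ Γ j0 (Finsupp.single a c) v = c • shift ℓ Γ j0 a.1.1 a.2.1 v := by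
  rw [mulA, Finsupp.sum_single_index (by simp), shift, Finsupp.linearCombination_apply,
    Finsupp.smul_sum]
  refine Finsupp.sum_congr fun b _ => ?_
  rw [smul_smul]

lemma mulA_mono (a : Idx F ℓ Γ j0) (v : CA F ℓ Γ j0) :
    mulA F ℓ Γ j0 (mono a) v = shift ℓ Γ j0 a.1.1 a.2.1 v := by
  rw [mono, mulA_single, one_smul]

lemma mulA_X (α : ℕ → F) (i : ℕ → ℕ) (v : CA F ℓ Γ j0) :
    mulA F ℓ Γ j0 (X F ℓ Γ j0 α i) v = shift ℓ Γ j0 α i v := by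
  by_cases h : α ∈ Γ ∧ i ∈ jIdx ℓ j0
  · rw [X_eq_mono h.1 h.2, mulA_mono]
  · have hshift : shift ℓ Γ j0 α i = 0 := ext_mono fun b => by
      refine (shift_mono α i b).trans (dif_neg fun hb => h ⟨?_, ?_⟩)
      · simpa using sub_mem hb.1 b.1.2
      · exact mem_jIdx_of_add_mem hb.2
    rw [X, dif_neg h, mulA_zero_left, hshift, LinearMap.zero_apply]

lemma Dop_mono (a : Idx F ℓ Γ j0) :
    Dop F ℓ Γ j0 (mono a) = ((∑ p ∈ jSet ℓ 1 3 ∪ iSet ℓ 4 5, a.1.1 p) +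
      ∑ p ∈ iSet ℓ 6 6 ∪ barSet ℓ (iSet ℓ 4 6), (a.2.1 p : F)) • mono a := by
  rw [Dop, add_smul, sum_smul, sum_smul]
  congr 1 <;> refine sum_congr rfl fun p _ => ?_
  · rw [pstar_eq_diag, diag_mono]
  · rw [mulA_X, pt_eq_lower, ← Module.End.mul_apply, shift_single_mul_lower, diag_mono]

/-- `Dop y = 2 y` kills the `(2 - ∂)` terms of `[y, v]`, and the support condition all summands
but the `p`-th. -/
lemma brk_mono_eq_of_support {a : Idx F ℓ Γ j0} {p : ℕ} (hp : p ∈ iSet ℓ 1 6)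
    (hsupp : ∀ r, r ≠ p → r ≠ bar ℓ p → a.1.1 r = 0 ∧ a.2.1 r = 0)
    (hdeg : Dop F ℓ Γ j0 (mono a) = (2 : F) • mono a) (v : CA F ℓ Γ j0) :
    brk F ℓ Γ j0 (mono a) v = shift ℓ Γ j0 (sgm F ℓ p) 0
      (mulA F ℓ Γ j0 (dd F ℓ Γ j0 p (mono a)) (dd F ℓ Γ j0 (bar ℓ p) v) -
        mulA F ℓ Γ j0 (dd F ℓ Γ j0 (bar ℓ p) (mono a)) (dd F ℓ Γ j0 p v)) := by
  have hdd : ∀ r, r ≠ p → r ≠ bar ℓ p → dd F ℓ Γ j0 r (mono a) = 0 := fun r h1 h2 => by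
    rw [dd_mono, (hsupp r h1 h2).1, (hsupp r h1 h2).2, Nat.cast_zero, zero_smul, zero_smul,
      add_zero]
  have hI : ∀ b ∈ iSet ℓ 1 6, 0 < b ∧ bar ℓ b = b + iot ℓ 6 := fun b hb => by
    simp only [mem_iSet, Nat.sub_self, iot_chain ℓ |>.1] at hb
    exact ⟨hb.1, bar_of_le hb.2⟩
  obtain ⟨hp0, hpbar⟩ := hI p hp
  have hp6 : p ≤ iot ℓ 6 := (mem_iSet.1 hp).2
  rw [brk, sum_eq_single_of_mem p hp, hdeg, sub_self, mulA_zero_left,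
    hdd 0 (by omega) (by omega), mulA_zero_left, add_zero, sub_zero, mulA_X]
  intro b hb hbp
  obtain ⟨hb0, hbbar⟩ := hI b hb
  have hb6 : b ≤ iot ℓ 6 := (mem_iSet.1 hb).2
  rw [hdd b hbp (by omega), hdd (bar ℓ b) (by omega) (by omega), mulA_zero_left, mulA_zero_left,
    sub_zero, mulA_zero_right]

end Bracket

section Sigma

variable {F : Type*} [Field F] {ℓ : ℕ → ℕ}

lemma neg_sgm_of_mem_iSet_13 {p : ℕ} (hp : p ∈ iSet ℓ 1 3) :
    -sgm F ℓ p = Pi.single p 1 + Pi.single (bar ℓ p) 1 := by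
  have hp6 := le_iot_six_of_mem_iSet (by norm_num) hp
  simp only [sgm, if_pos hp6, if_pos hp, bar_of_le hp6]
  abel

lemma neg_sgm_of_mem_iSet_45 {q : ℕ} (hq : q ∈ iSet ℓ 4 5) : -sgm F ℓ q = Pi.single q 1 := by
  have hq6 := le_iot_six_of_mem_iSet (by norm_num) hq
  have hq13 : q ∉ iSet ℓ 1 3 := by
    obtain ⟨-, -, -, h3, -⟩ := iot_chain ℓ
    rw [mem_iSet_succ] at hq ⊢
    omega
  simp only [sgm, if_pos hq6, if_neg hq13, if_pos hq, neg_neg]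

lemma bar_mem_of_mem_iSet_45 {q : ℕ} (hq : q ∈ iSet ℓ 4 5) :
    bar ℓ q ∈ iSet ℓ 6 6 ∪ barSet ℓ (iSet ℓ 4 6) :=
  mem_union_right _ (mem_image_of_mem _ (mem_iSet.2 ⟨(mem_iSet.1 hq).1,
    (mem_iSet.1 hq).2.trans (iot_mono ℓ (by norm_num))⟩))

end Sigma

section Generators

variable {F : Type*} [Field F] {ℓ : ℕ → ℕ} {Γ : AddSubgroup (ℕ → F)} {j0 : Bool}

lemma brk_X_zero_zero (v : CA F ℓ Γ j0) :
    brk F ℓ Γ j0 (X F ℓ Γ j0 0 0) v = (2 : F) • dd F ℓ Γ j0 0 v := by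
  set z : Idx F ℓ Γ j0 := (0, ⟨0, zero_mem_jIdx⟩)
  have hdd : ∀ r, dd F ℓ Γ j0 r (mono z) = 0 := fun r => by simp [dd_mono, z]
  have hDop : Dop F ℓ Γ j0 (mono z) = 0 := by simp [Dop_mono, z]
  rw [show X F ℓ Γ j0 0 0 = mono z from X_eq_mono Γ.zero_mem zero_mem_jIdx, brk, hDop, hdd,
    mulA_zero_left, sub_zero, sub_zero]
  simp only [hdd, mulA_zero_left, sub_zero, mulA_zero_right, sum_const_zero, zero_add]
  rw [mono, Finsupp.smul_single, smul_eq_mul, mul_one, mulA_single]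
  exact congrArg _ (LinearMap.congr_fun shift_zero _)

lemma brk_X_neg_sgm {p : ℕ} (hp : p ∈ iSet ℓ 1 3)
    (hΓ1 : ∀ r ∈ jSet ℓ 1 3 ∪ iSet ℓ 4 5, (Pi.single r (1 : F) : ℕ → F) ∈ Γ)
    (v : CA F ℓ Γ j0) :
    brk F ℓ Γ j0 (X F ℓ Γ j0 (-sgm F ℓ p) 0) v = dd F ℓ Γ j0 (bar ℓ p) v - dd F ℓ Γ j0 p v := by
  obtain ⟨h0, h1, h2, h3, h4, h5, h6⟩ := iot_chain ℓ
  have hp' := mem_iSet_succ.1 hp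
  have hbar : bar ℓ p = p + iot ℓ 6 := bar_of_le (by omega)
  have hpJ : p ∈ jSet ℓ 1 3 ∪ iSet ℓ 4 5 := mem_union_left _ (mem_union_left _ hp)
  have hbarJ : bar ℓ p ∈ jSet ℓ 1 3 ∪ iSet ℓ 4 5 :=
    mem_union_left _ (mem_union_right _ (mem_image_of_mem _ hp))
  have hαΓ : Pi.single p 1 + Pi.single (bar ℓ p) 1 ∈ Γ := add_mem (hΓ1 _ hpJ) (hΓ1 _ hbarJ)
  set a : Idx F ℓ Γ j0 := (⟨_, hαΓ⟩, ⟨0, zero_mem_jIdx⟩)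
  have hdd : ∀ r, (r = p ∨ r = bar ℓ p) → dd F ℓ Γ j0 r (mono a) = mono a := fun r hr => by
    rcases hr with rfl | rfl <;> simp [dd_mono, a, hbar, show iot ℓ 6 ≠ 0 by omega]
  have hdeg : Dop F ℓ Γ j0 (mono a) = (2 : F) • mono a := by
    simp only [Dop_mono, a, Pi.add_apply, sum_add_distrib, sum_pi_single', if_pos hpJ,
      if_pos hbarJ, Pi.zero_apply, Nat.cast_zero, sum_const_zero]
    norm_num
  rw [neg_sgm_of_mem_iSet_13 hp, X_eq_mono hαΓ zero_mem_jIdx,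
    brk_mono_eq_of_support (p := p) (mem_iSet_succ.2 ⟨hp'.1, by omega⟩)
      (fun r h1 h2 => by simp [h1, h2, a]) hdeg,
    hdd p (Or.inl rfl), hdd (bar ℓ p) (Or.inr rfl), mulA_mono, mulA_mono, ← map_sub,
    ← Module.End.mul_apply, shift_mul_shift hαΓ zero_mem_jIdx, ← neg_sgm_of_mem_iSet_13 hp,
    add_neg_cancel, add_zero, shift_zero, Module.End.one_apply]

lemma dd_eq_lower_of_mem
    (hΓ2 : ∀ α ∈ Γ, ∀ r ∈ iSet ℓ 6 6 ∪ barSet ℓ (iSet ℓ 4 6), α r = 0)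
    {r : ℕ} (hr : r ∈ iSet ℓ 6 6 ∪ barSet ℓ (iSet ℓ 4 6)) (v : CA F ℓ Γ j0) :
    dd F ℓ Γ j0 r v = lower F Γ r v := by
  have hdiag : diag ℓ Γ j0 (fun α _ => α r) = 0 := ext_mono fun c => by
    rw [diag_mono, hΓ2 _ c.1.2 _ hr, zero_smul, LinearMap.zero_apply]
  rw [dd_eq, hdiag, LinearMap.zero_apply, zero_add]

lemma brk_X_neg_sgm_single_bar {q : ℕ} (hq : q ∈ iSet ℓ 4 5)
    (hΓ1 : ∀ r ∈ jSet ℓ 1 3 ∪ iSet ℓ 4 5, (Pi.single r (1 : F) : ℕ → F) ∈ Γ)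
    (hΓ2 : ∀ α ∈ Γ, ∀ r ∈ iSet ℓ 6 6 ∪ barSet ℓ (iSet ℓ 4 6), α r = 0) (v : CA F ℓ Γ j0) :
    brk F ℓ Γ j0 (X F ℓ Γ j0 (-sgm F ℓ q) (Pi.single (bar ℓ q) 1)) v =
      diag ℓ Γ j0 (fun _ i => (i (bar ℓ q) : F)) v - dd F ℓ Γ j0 q v := by
  obtain ⟨h0, h1, h2, h3, h4, h5, h6⟩ := iot_chain ℓ
  have hq' := mem_iSet_succ.1 hq
  have hbar : bar ℓ q = q + iot ℓ 6 := bar_of_le (by omega)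
  have hαΓ : Pi.single q 1 ∈ Γ := hΓ1 q (mem_union_right _ hq)
  have hi : (Pi.single (bar ℓ q) 1 : ℕ → ℕ) ∈ jIdx ℓ j0 := single_mem_jIdx (by omega)
  set a : Idx F ℓ Γ j0 := (⟨_, hαΓ⟩, ⟨_, hi⟩)
  set b : Idx F ℓ Γ j0 := (⟨_, hαΓ⟩, ⟨0, zero_mem_jIdx⟩)
  have hι : iot ℓ 6 ≠ 0 := by omega
  have hdd_q : dd F ℓ Γ j0 q (mono a) = mono a := by simp [dd_mono, a, hbar, hι]
  have hdd_bar : dd F ℓ Γ j0 (bar ℓ q) (mono a) = mono b := by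
    rw [dd_mono, show lo a (bar ℓ q) = b from idx_ext rfl (by simp [lo, a, b])]
    simp [a, hbar, hι]
  have hdeg : Dop F ℓ Γ j0 (mono a) = (2 : F) • mono a := by
    simp only [Dop_mono, a, if_pos (mem_union_right _ hq), Pi.single_apply,
      apply_ite (Nat.cast : ℕ → F), Nat.cast_one, Nat.cast_zero, sum_ite_eq',
      if_pos (bar_mem_of_mem_iSet_45 hq)]
    norm_num
  have hσ : sgm F ℓ q + Pi.single q 1 = 0 := by
    rw [← neg_sgm_of_mem_iSet_45 hq, add_neg_cancel]
  rw [neg_sgm_of_mem_iSet_45 hq, X_eq_mono hαΓ hi,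
    brk_mono_eq_of_support (p := q) (mem_iSet_succ.2 ⟨by omega, by omega⟩)
      (fun r h1 h2 => by simp [a, h1, h2]) hdeg,
    hdd_q, hdd_bar, mulA_mono, mulA_mono, map_sub, ← Module.End.mul_apply, ← Module.End.mul_apply,
    shift_mul_shift hαΓ hi, shift_mul_shift hαΓ zero_mem_jIdx, hσ,
    zero_add, add_zero, shift_zero, Module.End.one_apply,
    dd_eq_lower_of_mem hΓ2 (bar_mem_of_mem_iSet_45 hq), ← Module.End.mul_apply,
    shift_single_mul_lower]

end Generators

/-- Labels of the elements of `A₁`: `1` (when `𝒥₀ = ℕ`), `x^{-σ_p}` for `p ∈ I_{2,3}`, and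
`x^{-σ_q, 1_{[q̄]}}` for `q ∈ I₅`. -/
inductive A1Gen (ℓ : ℕ → ℕ) (j0 : Bool) : Type
  | one (h : j0 = true)
  | x (p : ℕ) (hp : p ∈ iSet ℓ 2 3)
  | xt (q : ℕ) (hq : q ∈ iSet ℓ 5 5)

namespace A1Gen

variable {F : Type*} [Field F] {ℓ : ℕ → ℕ} {Γ : AddSubgroup (ℕ → F)} {j0 : Bool}

variable (F Γ) in
def elem : A1Gen ℓ j0 → CA F ℓ Γ j0
  | one _ => X F ℓ Γ j0 0 0
  | x p _ => X F ℓ Γ j0 (-sgm F ℓ p) 0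
  | xt q _ => X F ℓ Γ j0 (-sgm F ℓ q) (Pi.single (bar ℓ q) 1)

variable [CharZero F] (F Γ) in
def adData : A1Gen ℓ j0 → AdData F ℓ Γ j0
  | one h =>
    { f := fun α _ => 2 * α 0, s := 2, c := 0, r := 0, m := 0
      s_ne_zero := two_ne_zero
      c_eq_zero_or_m_ne_r := Or.inl rfl
      single_r_mem := single_zero_mem_jIdx h
      shiftInvariant_r := fun _ _ => rfl
      shiftInvariant_m := fun _ _ => rfl }
  | x p hp =>
    { f := fun α _ => α (bar ℓ p) - α p, s := 1, c := -1, r := bar ℓ p, m := p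
      s_ne_zero := one_ne_zero
      c_eq_zero_or_m_ne_r := Or.inr <| by
        have := bounds_of_mem_iSet_23 hp; have := iot_chain ℓ; omega
      single_r_mem := single_mem_jIdx <| by
        have := bounds_of_mem_iSet_23 hp; have := iot_chain ℓ; omega
      shiftInvariant_r := fun _ _ => rfl
      shiftInvariant_m := fun _ _ => rfl }
  | xt q hq =>
    { f := fun α i => (i (bar ℓ q) : F) - α q, s := -1, c := 0, r := q, m := q
      s_ne_zero := neg_ne_zero.2 one_ne_zero
      c_eq_zero_or_m_ne_r := Or.inl rfl
      single_r_mem := single_mem_jIdx <| by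
        have := bounds_of_mem_iSet_55 hq; have := iot_chain ℓ; omega
      shiftInvariant_r := fun α i => by
        have := bounds_of_mem_iSet_55 hq
        have := iot_chain ℓ
        simp [show bar ℓ q ≠ q by omega]
      shiftInvariant_m := fun α i => by
        have := bounds_of_mem_iSet_55 hq
        have := iot_chain ℓ
        simp [show bar ℓ q ≠ q by omega] }

lemma exists_elem_eq {y : CA F ℓ Γ j0} (hy : y ∈ A1 F ℓ Γ j0) :
    ∃ g : A1Gen ℓ j0, g.elem F Γ = y := by
  rcases hy with (⟨p, hp, rfl⟩ | ⟨q, hq, rfl⟩) | ⟨h, rfl⟩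
  exacts [⟨x p hp, rfl⟩, ⟨xt q hq, rfl⟩, ⟨one h, rfl⟩]

theorem brk_elem [CharZero F]
    (hΓ1 : ∀ r ∈ jSet ℓ 1 3 ∪ iSet ℓ 4 5, (Pi.single r (1 : F) : ℕ → F) ∈ Γ)
    (hΓ2 : ∀ α ∈ Γ, ∀ r ∈ iSet ℓ 6 6 ∪ barSet ℓ (iSet ℓ 4 6), α r = 0)
    (g : A1Gen ℓ j0) (v : CA F ℓ Γ j0) :
    brk F ℓ Γ j0 (g.elem F Γ) v = (g.adData F Γ).toEnd v := by
  rcases g with h | ⟨p, hp⟩ | ⟨q, hq⟩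
  · rw [elem, brk_X_zero_zero, dd_eq]
    simp only [adData, AdData.toEnd, AdData.nil, diag_const_mul, LinearMap.add_apply,
      LinearMap.smul_apply]
    module
  · rw [elem, brk_X_neg_sgm (iSet_subset_iSet (by norm_num) le_rfl hp) hΓ1, dd_eq, dd_eq]
    simp only [adData, AdData.toEnd, AdData.nil, diag_sub, LinearMap.add_apply,
      LinearMap.sub_apply, LinearMap.smul_apply]
    module
  · rw [elem, brk_X_neg_sgm_single_bar (iSet_subset_iSet (by norm_num) le_rfl hq) hΓ1 hΓ2,
      dd_eq]
    simp only [adData, AdData.toEnd, AdData.nil, diag_sub, LinearMap.add_apply,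
      LinearMap.sub_apply, LinearMap.smul_apply]
    module

theorem adData_compatible [CharZero F] {g g' : A1Gen ℓ j0} (h : g ≠ g') :
    (g.adData F Γ).Compatible (g'.adData F Γ) := by
  have := iot_chain ℓ
  rcases g with h1 | ⟨p, hp⟩ | ⟨q, hq⟩ <;> rcases g' with h1' | ⟨p', hp'⟩ | ⟨q', hq'⟩
  · exact absurd rfl h
  all_goals
    (try have := bounds_of_mem_iSet_23 hp); (try have := bounds_of_mem_iSet_23 hp')
    (try have := bounds_of_mem_iSet_55 hq); (try have := bounds_of_mem_iSet_55 hq')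
    (try have : p ≠ p' := by rintro rfl; exact h rfl)
    (try have : q ≠ q' := by rintro rfl; exact h rfl)
    refine ⟨?_, ?_, ?_, ?_, ?_, ?_, ?_, ?_⟩ <;>
      simp only [adData, ShiftInvariant, Pi.add_apply, implies_true]
    all_goals first
      | omega
      | (intro α i; rw [Pi.single_eq_of_ne (by omega), Nat.add_zero])

end A1Gen

end ContactA1

open ContactA1

theorem A1_ad_surjective_with_compatible_preimages_general
    {F : Type*} [Field F] [CharZero F] (ℓ : ℕ → ℕ) (Γ : AddSubgroup (ℕ → F)) (j0 : Bool)
    (hΓ1 : ∀ p ∈ jSet ℓ 1 3 ∪ iSet ℓ 4 5, (Pi.single p (1 : F) : ℕ → F) ∈ Γ)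
    (hΓ2 : ∀ α ∈ Γ, ∀ p ∈ iSet ℓ 6 6 ∪ barSet ℓ (iSet ℓ 4 6), α p = 0) :
    (∀ y ∈ A1 F ℓ Γ j0, ∀ u : CA F ℓ Γ j0, ∃ v : CA F ℓ Γ j0,
      u = brk F ℓ Γ j0 y v ∧
        ∀ z ∈ A1 F ℓ Γ j0, z ≠ y → brk F ℓ Γ j0 z u = 0 → brk F ℓ Γ j0 z v = 0) ∧
    (∀ y ∈ A1 F ℓ Γ j0, Function.Surjective (brk F ℓ Γ j0 y)) := by
  have preimage : ∀ y ∈ A1 F ℓ Γ j0, ∀ u : CA F ℓ Γ j0, ∃ v : CA F ℓ Γ j0,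
      u = brk F ℓ Γ j0 y v ∧
        ∀ z ∈ A1 F ℓ Γ j0, z ≠ y → brk F ℓ Γ j0 z u = 0 → brk F ℓ Γ j0 z v = 0 := by
    intro y hy u
    obtain ⟨g, rfl⟩ := A1Gen.exists_elem_eq hy
    refine ⟨(g.adData F Γ).inv u, by rw [A1Gen.brk_elem hΓ1 hΓ2, AdData.toEnd_inv], ?_⟩
    intro z hz hzy hzu
    obtain ⟨g', rfl⟩ := A1Gen.exists_elem_eq hz
    have hne : g ≠ g' := by rintro rfl; exact hzy rfl
    rw [A1Gen.brk_elem hΓ1 hΓ2] at hzu ⊢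
    exact (A1Gen.adData_compatible hne).toEnd_inv_eq_zero hzu
  exact ⟨preimage, fun y hy u => (preimage y hy u).imp fun v hv => hv.1.symm⟩

/-- **Claim 1.** For every `y ∈ A₁` and `u ∈ 𝒦` there is `v ∈ 𝒦` with
`u = [y,v]`, and such that `[z,v] = 0` for every `z ∈ A₁∖{y}` with `[z,u] = 0`.
In particular `ad y` is surjective for every `y ∈ A₁`. -/
theorem A1_ad_surjective_with_compatible_preimages
    {F : Type*} [Field F] [CharZero F] (ℓ : ℕ → ℕ) (Γ : AddSubgroup (ℕ → F)) (j0 : Bool)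
    (hℓ : 0 < iot ℓ 6)
    (hΓ1 : ∀ p ∈ jSet ℓ 1 3 ∪ iSet ℓ 4 5, (Pi.single p (1 : F) : ℕ → F) ∈ Γ)
    (hΓ2 : ∀ α ∈ Γ, ∀ p ∈ iSet ℓ 6 6 ∪ barSet ℓ (iSet ℓ 4 6), α p = 0)
    (hΓ3 : ∀ α ∈ Γ, ∀ p, 2 * iot ℓ 6 < p → α p = 0)
    (hΓ0 : (∃ α ∈ Γ, α 0 ≠ 0) → (Pi.single 0 (1 : F) : ℕ → F) ∈ Γ)
    (hJ0 : j0 = false → ∃ α ∈ Γ, α 0 ≠ 0) :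
    (∀ y ∈ A1 F ℓ Γ j0, ∀ u : CA F ℓ Γ j0, ∃ v : CA F ℓ Γ j0,
      u = brk F ℓ Γ j0 y v ∧
        ∀ z ∈ A1 F ℓ Γ j0, z ≠ y → brk F ℓ Γ j0 z u = 0 → brk F ℓ Γ j0 z v = 0) ∧
    (∀ y ∈ A1 F ℓ Γ j0, Function.Surjective (brk F ℓ Γ j0 y)) :=
  A1_ad_surjective_with_compatible_preimages_general ℓ Γ j0 hΓ1 hΓ2

end
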